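/- Under the same hypotheses, d/dt ∫_Ω (ε|∇φ|²/2 + W(φ)/ε) dx + (1/2)∫_Ω ε(φ_t)² dx ≤ (d²/R₀²) ∫_Ω W(φ)/ε dx. -/

import Mathlib

open MeasureTheory

/-- Laplacian of `f : ℝ^d → ℝ` as the sum of second partial derivatives. -/
noncomputable def lap {d : ℕ} (f : EuclideanSpace ℝ (Fin d) → ℝ)
    (x : EuclideanSpace ℝ (Fin d)) : ℝ :=
  ∑ i : Fin d, fderiv ℝ (fun y => fderiv ℝ f y (EuclideanSpace.single i 1)) x
    (EuclideanSpace.single i 1)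

/-- The fundamental cube `[0,1]^d`, representing the torus `(ℝ/ℤ)^d`. -/
def cube (d : ℕ) : Set (EuclideanSpace ℝ (Fin d)) :=
  {x | ∀ i, x i ∈ Set.Icc (0 : ℝ) 1}

/-! ### Auxiliary material -/

section SP5basic

lemma SP5.cube_eq_preimage (d : ℕ) :
    cube d = ((MeasurableEquiv.toLp 2 (Fin d → ℝ)).symm) ⁻¹' (Set.Icc 0 1) := by
  ext x
  simp only [cube, Set.mem_preimage, Set.mem_Icc, Set.mem_setOf_eq, Pi.le_def]
  exact ⟨fun h => ⟨fun i => (h i).1, fun i => (h i).2⟩, fun h i => ⟨h.1 i, h.2 i⟩⟩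

lemma SP5.isCompact_cube (d : ℕ) : IsCompact (cube d) := by
  have : cube d = (EuclideanSpace.equiv (Fin d) ℝ).toHomeomorph ⁻¹' (Set.Icc 0 1) := by
    rw [SP5.cube_eq_preimage]; rfl
  rw [this, ← Homeomorph.image_symm]
  exact isCompact_Icc.image (Homeomorph.continuous _)

lemma SP5.measurableSet_cube (d : ℕ) : MeasurableSet (cube d) :=
  (SP5.isCompact_cube d).isClosed.measurableSet

lemma SP5.integrableOn_cube {d : ℕ} {f : EuclideanSpace ℝ (Fin d) → ℝ} (hf : Continuous f) :
    IntegrableOn f (cube d) :=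
  hf.continuousOn.integrableOn_compact (SP5.isCompact_cube d)

lemma SP5.integral_cube_eq (d : ℕ) (f : EuclideanSpace ℝ (Fin d) → ℝ) :
    ∫ x in cube d, f x =
      ∫ y in Set.Icc (0 : Fin d → ℝ) 1, f (((MeasurableEquiv.toLp 2 (Fin d → ℝ)).symm).symm y) := by
  rw [SP5.cube_eq_preimage]
  rw [← MeasurePreserving.setIntegral_preimage_emb
    (EuclideanSpace.volume_preserving_symm_measurableEquiv_toLp (Fin d))
    ((MeasurableEquiv.toLp 2 (Fin d → ℝ)).symm).measurableEmbedding
    (fun y => f (((MeasurableEquiv.toLp 2 (Fin d → ℝ)).symm).symm y)) (Set.Icc 0 1)]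
  simp

lemma SP5.grad_norm_sq {d : ℕ} (f : EuclideanSpace ℝ (Fin d) → ℝ) (x : EuclideanSpace ℝ (Fin d)) :
    ‖gradient f x‖ ^ 2 = ∑ i : Fin d, (fderiv ℝ f x (EuclideanSpace.single i 1)) ^ 2 := by
  have hcoord : ∀ i, gradient f x i = fderiv ℝ f x (EuclideanSpace.single i 1) := by
    intro i
    have : (inner ℝ (gradient f x) (EuclideanSpace.single i (1:ℝ)) : ℝ)
        = fderiv ℝ f x (EuclideanSpace.single i 1) := by
      rw [gradient, InnerProductSpace.toDual_symm_apply]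
    rwa [EuclideanSpace.inner_single_right, one_mul, RCLike.conj_to_real] at this
  have := EuclideanSpace.norm_eq (gradient f x)
  rw [this, Real.sq_sqrt (by positivity)]
  exact Finset.sum_congr rfl fun i _ => by rw [Real.norm_eq_abs, sq_abs, hcoord i]

/-- If `f` is invariant under translation by `c`, so is its `fderiv`. -/
lemma SP5.fderiv_periodic {E : Type*} [NormedAddCommGroup E] [NormedSpace ℝ E]
    {F : Type*} [NormedAddCommGroup F] [NormedSpace ℝ F]
    (f : E → F) (c : E) (hf : ∀ x, f (x + c) = f x)
    (x : E) (hd : DifferentiableAt ℝ f (x + c)) :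
    fderiv ℝ f (x + c) = fderiv ℝ f x := by
  have h1 : HasFDerivAt (fun y : E => y + c) (ContinuousLinearMap.id ℝ E) x :=
    (hasFDerivAt_id x).add_const c
  have h2 : HasFDerivAt (fun y => f (y + c)) ((fderiv ℝ f (x + c)).comp
      (ContinuousLinearMap.id ℝ E)) x := hd.hasFDerivAt.comp x h1
  have h3 : HasFDerivAt f ((fderiv ℝ f (x + c))) x := by
    simpa [funext hf] using h2
  exact (h3.fderiv).symm

/-- Divergence theorem on the unit cube for smooth periodic vector fields. -/
lemma SP5.divergence_cube_zero (n : ℕ) (V : Fin (n + 1) → EuclideanSpace ℝ (Fin (n + 1)) → ℝ)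
    (hV : ∀ i, ContDiff ℝ (⊤ : ℕ∞) (V i))
    (hper : ∀ i j x, V i (x + EuclideanSpace.single j 1) = V i x) :
    ∫ x in cube (n + 1), ∑ i, fderiv ℝ (V i) x (EuclideanSpace.single i 1) = 0 := by
  set eL := EuclideanSpace.equiv (Fin (n + 1)) ℝ with heL
  have hsymm_coe : ⇑((MeasurableEquiv.toLp 2 (Fin (n+1) → ℝ)).symm).symm = ⇑eL.symm := rfl
  have heLsingle : ∀ i : Fin (n+1), eL.symm (Pi.single i 1) = EuclideanSpace.single i 1 :=
    fun i => rfl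
  set f : Fin (n+1) → (Fin (n+1) → ℝ) → ℝ := fun i y => V i (eL.symm y) with hf
  set f' : Fin (n+1) → (Fin (n+1) → ℝ) → (Fin (n+1) → ℝ) →L[ℝ] ℝ :=
    fun i y => (fderiv ℝ (V i) (eL.symm y)).comp
      (eL.symm : _ ≃L[ℝ] _).toContinuousLinearMap
    with hf'
  have hd : ∀ (y) (i : Fin (n+1)), HasFDerivAt (f i) (f' i y) y := fun y i =>
    ((hV i).differentiable (by simp) _).hasFDerivAt.comp y (eL.symm.toContinuousLinearMap.hasFDerivAt)
  have key := MeasureTheory.integral_divergence_of_hasFDerivAt_off_countable'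
    (0 : Fin (n+1) → ℝ) 1 (by intro i; simp) f f' ∅ Set.countable_empty
    (fun i => ((hV i).continuous.comp eL.symm.continuous).continuousOn)
    (fun x _ i => hd x i)
    (by
      apply (Continuous.continuousOn ?_).integrableOn_compact isCompact_Icc
      apply continuous_finset_sum
      intro i _
      have h1 : Continuous (fderiv ℝ (V i)) := ((hV i).fderiv_right (m := (⊤ : ℕ∞)) (by simp)).continuous
      exact ((ContinuousLinearMap.apply ℝ ℝ
        ((EuclideanSpace.single i 1 : EuclideanSpace ℝ (Fin (n+1))))).continuous.comp
        (h1.comp eL.symm.continuous)))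
  have hbd : ∀ i : Fin (n+1), ∀ x : Fin n → ℝ,
      f i (i.insertNth (1:ℝ) x : Fin (n+1) → ℝ) = f i (i.insertNth (0:ℝ) x : Fin (n+1) → ℝ) := by
    intro i x
    have hins : (i.insertNth (1:ℝ) x : Fin (n+1) → ℝ)
        = (i.insertNth (0:ℝ) x : Fin (n+1) → ℝ) + Pi.single i 1 := by
      funext j
      rcases eq_or_ne j i with rfl | hji
      · simp
      · obtain ⟨k, rfl⟩ := Fin.exists_succAbove_eq hji
        simp [Fin.succAbove_ne i k]
    have : eL.symm (i.insertNth (1:ℝ) x : Fin (n+1) → ℝ)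
        = eL.symm (i.insertNth (0:ℝ) x : Fin (n+1) → ℝ) + EuclideanSpace.single i 1 := by
      rw [hins, map_add, heLsingle]
    simp only [hf, this, hper]
  rw [SP5.integral_cube_eq]
  have h0 : (∫ y in Set.Icc (0 : Fin (n+1) → ℝ) 1, ∑ i, f' i y (Pi.single i 1)) = 0 := by
    rw [key]
    refine Finset.sum_eq_zero fun i _ => ?_
    rw [sub_eq_zero]
    refine setIntegral_congr_fun measurableSet_Icc fun x _ => ?_
    simpa using hbd i x
  rw [← h0]
  refine setIntegral_congr_fun measurableSet_Icc fun y _ => ?_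
  rfl

lemma SP5.divergence_cube_zero' (d : ℕ) (hd : 1 ≤ d)
    (V : Fin d → EuclideanSpace ℝ (Fin d) → ℝ)
    (hV : ∀ i, ContDiff ℝ (⊤ : ℕ∞) (V i))
    (hper : ∀ i j x, V i (x + EuclideanSpace.single j 1) = V i x) :
    ∫ x in cube d, ∑ i, fderiv ℝ (V i) x (EuclideanSpace.single i 1) = 0 := by
  obtain ⟨n, rfl⟩ : ∃ n, d = n + 1 := ⟨d - 1, by omega⟩
  exact SP5.divergence_cube_zero n V hV hper

end SP5basic

noncomputable section SP5aux

variable {d : ℕ}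
local notation "ES" => EuclideanSpace ℝ (Fin d)

/-- i-th spatial partial derivative of the joint function. -/
def SP5.pD (Φ : EuclideanSpace ℝ (Fin d) × ℝ → ℝ) (i : Fin d) (x : EuclideanSpace ℝ (Fin d))
    (s : ℝ) : ℝ :=
  fderiv ℝ Φ (x, s) (EuclideanSpace.single i 1, 0)

/-- time derivative of the joint function. -/
def SP5.pT (Φ : EuclideanSpace ℝ (Fin d) × ℝ → ℝ) (x : EuclideanSpace ℝ (Fin d)) (s : ℝ) : ℝ :=
  fderiv ℝ Φ (x, s) (0, 1)

/-- mixed second derivative. -/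
def SP5.qD (Φ : EuclideanSpace ℝ (Fin d) × ℝ → ℝ) (i : Fin d) (x : EuclideanSpace ℝ (Fin d))
    (s : ℝ) : ℝ :=
  fderiv ℝ (fderiv ℝ Φ) (x, s) (0, 1) (EuclideanSpace.single i 1, 0)

/-- pure second spatial derivative. -/
def SP5.rD (Φ : EuclideanSpace ℝ (Fin d) × ℝ → ℝ) (i : Fin d) (x : EuclideanSpace ℝ (Fin d))
    (s : ℝ) : ℝ :=
  fderiv ℝ (fderiv ℝ Φ) (x, s) (EuclideanSpace.single i 1, 0) (EuclideanSpace.single i 1, 0)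

namespace SP5

variable {Φ : EuclideanSpace ℝ (Fin d) × ℝ → ℝ}

lemma fderiv_slice (x : ES) (t : ℝ) (hΦ' : DifferentiableAt ℝ Φ (x, t)) (v : ES) :
    fderiv ℝ (fun y => Φ (y, t)) x v = fderiv ℝ Φ (x, t) (v, 0) := by
  have h1 : HasFDerivAt (fun y : ES => (y, t)) (ContinuousLinearMap.inl ℝ ES ℝ) x :=
    hasFDerivAt_prodMk_left _ _
  have h2 := (hΦ'.hasFDerivAt.comp x h1).fderiv
  rw [show (fun y => Φ (y, t)) = Φ ∘ (fun y : ES => (y, t)) from rfl, h2]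
  rfl

variable (hΦ : ContDiff ℝ (⊤ : ℕ∞) Φ)
include hΦ

lemma hasDerivAt_sliceT (x : ES) (t : ℝ) :
    HasDerivAt (fun s => Φ (x, s)) (pT Φ x t) t := by
  have h1 : HasDerivAt (fun s : ℝ => (x, s)) ((0 : ES), (1 : ℝ)) t :=
    (hasDerivAt_const t x).prodMk (hasDerivAt_id t)
  exact (hΦ.differentiable (by simp) _).hasFDerivAt.comp_hasDerivAt t h1

lemma deriv_sliceT (x : ES) (t : ℝ) :
    deriv (fun s => Φ (x, s)) t = pT Φ x t := (hasDerivAt_sliceT hΦ x t).deriv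

lemma hasFDerivAt_fderiv_apply (p : ES × ℝ) (v : ES × ℝ) :
    HasFDerivAt (fun q => fderiv ℝ Φ q v)
      ((ContinuousLinearMap.apply ℝ ℝ v).comp (fderiv ℝ (fderiv ℝ Φ) p)) p := by
  have h1 : HasFDerivAt (fderiv ℝ Φ) (fderiv ℝ (fderiv ℝ Φ) p) p :=
    (((hΦ.fderiv_right (m := (⊤ : ℕ∞)) (by simp))).differentiable (by simp) p).hasFDerivAt
  exact (ContinuousLinearMap.apply ℝ ℝ v).hasFDerivAt.comp p h1

lemma sndFDeriv_symm (p v w : ES × ℝ) :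
    fderiv ℝ (fderiv ℝ Φ) p v w = fderiv ℝ (fderiv ℝ Φ) p w v :=
  second_derivative_symmetric (fun q => (hΦ.differentiable (by simp) q).hasFDerivAt)
    (((hΦ.fderiv_right (m := (⊤ : ℕ∞)) (by simp)).differentiable (by simp) p).hasFDerivAt) v w

lemma hasDerivAt_pDt (i : Fin d) (x : ES) (t : ℝ) :
    HasDerivAt (fun s => pD Φ i x s) (qD Φ i x t) t := by
  have h1 : HasDerivAt (fun s : ℝ => (x, s)) ((0 : ES), (1 : ℝ)) t :=
    (hasDerivAt_const t x).prodMk (hasDerivAt_id t)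
  have h2 := (hasFDerivAt_fderiv_apply hΦ (x, t)
    (EuclideanSpace.single i 1, 0)).comp_hasDerivAt t h1
  simpa [pD, qD, Function.comp_def] using h2

lemma cont_pD (i : Fin d) : Continuous fun p : ES × ℝ => pD Φ i p.1 p.2 := by
  have h1 : Continuous (fderiv ℝ Φ) := (hΦ.fderiv_right (m := (⊤ : ℕ∞)) (by simp)).continuous
  exact (ContinuousLinearMap.apply ℝ ℝ
    ((EuclideanSpace.single i 1 : ES), (0:ℝ))).continuous.comp h1

lemma cont_pT : Continuous fun p : ES × ℝ => pT Φ p.1 p.2 := by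
  have h1 : Continuous (fderiv ℝ Φ) := (hΦ.fderiv_right (m := (⊤ : ℕ∞)) (by simp)).continuous
  exact (ContinuousLinearMap.apply ℝ ℝ ((0 : ES), (1:ℝ))).continuous.comp h1

lemma cont_qD (i : Fin d) : Continuous fun p : ES × ℝ => qD Φ i p.1 p.2 := by
  have h1 : Continuous (fderiv ℝ (fderiv ℝ Φ)) :=
    ((hΦ.fderiv_right (m := (⊤ : ℕ∞)) (by simp)).fderiv_right (m := (⊤ : ℕ∞)) (by simp)).continuous
  have h2 : Continuous fun p : ES × ℝ => fderiv ℝ (fderiv ℝ Φ) p (0, 1) :=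
    (ContinuousLinearMap.apply ℝ (ES × ℝ →L[ℝ] ℝ) ((0 : ES), (1:ℝ))).continuous.comp h1
  exact (ContinuousLinearMap.apply ℝ ℝ
    ((EuclideanSpace.single i 1 : ES), (0:ℝ))).continuous.comp h2

lemma cont_rD (i : Fin d) : Continuous fun p : ES × ℝ => rD Φ i p.1 p.2 := by
  have h1 : Continuous (fderiv ℝ (fderiv ℝ Φ)) :=
    ((hΦ.fderiv_right (m := (⊤ : ℕ∞)) (by simp)).fderiv_right (m := (⊤ : ℕ∞)) (by simp)).continuous
  have h2 : Continuous fun p : ES × ℝ =>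
      fderiv ℝ (fderiv ℝ Φ) p (EuclideanSpace.single i 1, 0) :=
    (ContinuousLinearMap.apply ℝ (ES × ℝ →L[ℝ] ℝ)
      ((EuclideanSpace.single i 1 : ES), (0:ℝ))).continuous.comp h1
  exact (ContinuousLinearMap.apply ℝ ℝ
    ((EuclideanSpace.single i 1 : ES), (0:ℝ))).continuous.comp h2

lemma contDiff_pD_x (i : Fin d) (t : ℝ) : ContDiff ℝ (⊤ : ℕ∞) fun x : ES => pD Φ i x t := by
  have h1 : ContDiff ℝ (⊤ : ℕ∞) fun p : ES × ℝ => fderiv ℝ Φ p (EuclideanSpace.single i 1, 0) :=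
    (hΦ.fderiv_right (m := (⊤ : ℕ∞)) (by simp)).clm_apply contDiff_const
  exact h1.comp (contDiff_id.prodMk contDiff_const)

lemma contDiff_pT_x (t : ℝ) : ContDiff ℝ (⊤ : ℕ∞) fun x : ES => pT Φ x t := by
  have h1 : ContDiff ℝ (⊤ : ℕ∞) fun p : ES × ℝ => fderiv ℝ Φ p (0, 1) :=
    (hΦ.fderiv_right (m := (⊤ : ℕ∞)) (by simp)).clm_apply contDiff_const
  exact h1.comp (contDiff_id.prodMk contDiff_const)

lemma hasFDerivAt_pD_x (i : Fin d) (x : ES) (t : ℝ) :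
    HasFDerivAt (fun y : ES => pD Φ i y t)
      (((ContinuousLinearMap.apply ℝ ℝ ((EuclideanSpace.single i 1 : ES), (0:ℝ))).comp
        (fderiv ℝ (fderiv ℝ Φ) (x, t))).comp (ContinuousLinearMap.inl ℝ ES ℝ)) x := by
  have h1 : HasFDerivAt (fun y : ES => (y, t)) (ContinuousLinearMap.inl ℝ ES ℝ) x :=
    hasFDerivAt_prodMk_left _ _
  exact (hasFDerivAt_fderiv_apply hΦ (x, t) (EuclideanSpace.single i 1, 0)).comp x h1

lemma hasFDerivAt_pT_x (x : ES) (t : ℝ) :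
    HasFDerivAt (fun y : ES => pT Φ y t)
      (((ContinuousLinearMap.apply ℝ ℝ ((0 : ES), (1:ℝ))).comp
        (fderiv ℝ (fderiv ℝ Φ) (x, t))).comp (ContinuousLinearMap.inl ℝ ES ℝ)) x := by
  have h1 : HasFDerivAt (fun y : ES => (y, t)) (ContinuousLinearMap.inl ℝ ES ℝ) x :=
    hasFDerivAt_prodMk_left _ _
  exact (hasFDerivAt_fderiv_apply hΦ (x, t) (0, 1)).comp x h1

lemma lap_slice (x : ES) (t : ℝ) :
    lap (fun y => Φ (y, t)) x = ∑ i, rD Φ i x t := by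
  unfold lap
  refine Finset.sum_congr rfl fun i _ => ?_
  have hfun : (fun y : ES => fderiv ℝ (fun z => Φ (z, t)) y (EuclideanSpace.single i 1))
      = fun y : ES => pD Φ i y t := by
    funext y
    exact fderiv_slice y t (hΦ.differentiable (by simp) _) _
  rw [hfun, (hasFDerivAt_pD_x hΦ i x t).fderiv]
  rfl

lemma hasDerivAt_energy (W : ℝ → ℝ) (hWs : ContDiff ℝ (⊤ : ℕ∞) W) (ε : ℝ) (t : ℝ) :
    HasDerivAt (fun s => ∫ x in cube d,
        (ε * (∑ i, (pD Φ i x s) ^ 2) / 2 + W (Φ (x, s)) / ε))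
      (∫ x in cube d,
        (ε * (∑ i, pD Φ i x t * qD Φ i x t) + deriv W (Φ (x, t)) * pT Φ x t / ε)) t := by
  set F : ℝ → ES → ℝ := fun s x => ε * (∑ i, (pD Φ i x s) ^ 2) / 2 + W (Φ (x, s)) / ε
    with hF
  set F' : ℝ → ES → ℝ := fun s x =>
    ε * (∑ i, pD Φ i x s * qD Φ i x s) + deriv W (Φ (x, s)) * pT Φ x s / ε with hF'
  have hcontF' : Continuous fun p : ES × ℝ => F' p.2 p.1 := by
    have h1 : Continuous fun p : ES × ℝ => ∑ i, pD Φ i p.1 p.2 * qD Φ i p.1 p.2 := by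
      apply continuous_finset_sum
      exact fun i _ => (cont_pD hΦ i).mul (cont_qD hΦ i)
    have h2 : Continuous fun p : ES × ℝ => deriv W (Φ (p.1, p.2)) :=
      (hWs.continuous_deriv (by simp)).comp (by exact hΦ.continuous.comp (continuous_id'))
    exact ((continuous_const.mul h1).add ((h2.mul (cont_pT hΦ)).div_const ε))
  have hcontF : ∀ s, Continuous fun x : ES => F s x := by
    intro s
    have h1 : Continuous fun x : ES => ∑ i, (pD Φ i x s) ^ 2 := by
      apply continuous_finset_sum
      intro i _
      exact ((cont_pD hΦ i).comp (Continuous.prodMk_left s)).pow 2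
    have h2 : Continuous fun x : ES => W (Φ (x, s)) :=
      (hWs.continuous.comp (hΦ.continuous.comp (Continuous.prodMk_left s)))
    exact (((continuous_const.mul h1)).div_const 2).add (h2.div_const ε)
  have hderiv : ∀ x s, HasDerivAt (fun u => F u x) (F' s x) s := by
    intro x s
    have h1 : ∀ i : Fin d, HasDerivAt (fun u => (pD Φ i x u) ^ 2)
        (2 * pD Φ i x s * qD Φ i x s) s := by
      intro i
      have h0 := (hasDerivAt_pDt hΦ i x s).mul (hasDerivAt_pDt hΦ i x s)
      have hfun : (fun u => pD Φ i x u ^ 2) = fun u => pD Φ i x u * pD Φ i x u := by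
        funext u; ring
      rw [hfun, show 2 * pD Φ i x s * qD Φ i x s
        = qD Φ i x s * pD Φ i x s + pD Φ i x s * qD Φ i x s by ring]
      exact h0
    have hsum : HasDerivAt (fun u => ∑ i, (pD Φ i x u) ^ 2)
        (∑ i, 2 * pD Φ i x s * qD Φ i x s) s := HasDerivAt.fun_sum (fun i _ => h1 i)
    have hW1 : HasDerivAt (fun u => W (Φ (x, u))) (deriv W (Φ (x, s)) * pT Φ x s) s :=
      ((hWs.differentiable (by simp) (Φ (x, s))).hasDerivAt).comp s (hasDerivAt_sliceT hΦ x s)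
    have := ((hsum.const_mul ε).div_const 2).fun_add (hW1.div_const ε)
    refine this.congr_deriv (Eq.symm ?_)
    simp only [hF']
    rw [Finset.mul_sum, Finset.mul_sum, Finset.sum_div]
    congr 1
    exact Finset.sum_congr rfl fun i _ => by ring
  obtain ⟨C, hC⟩ : ∃ C, ∀ p ∈ (cube d ×ˢ Set.Icc (t - 1) (t + 1) :
      Set (ES × ℝ)), ‖F' p.2 p.1‖ ≤ C :=
    ((SP5.isCompact_cube d).prod isCompact_Icc).exists_bound_of_continuousOn
      hcontF'.continuousOn
  have key := hasDerivAt_integral_of_dominated_loc_of_deriv_le (𝕜 := ℝ)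
    (μ := volume.restrict (cube d)) (x₀ := t) (F := F) (F' := fun s x => F' s x)
    (bound := fun _ => max C 0) (s := Metric.ball t 1) (Metric.ball_mem_nhds t one_pos)
    (Filter.Eventually.of_forall fun s => ((hcontF s).aestronglyMeasurable))
    ((SP5.integrableOn_cube (hcontF t)))
    ((hcontF'.comp (Continuous.prodMk_left t)).aestronglyMeasurable)
    ?_ ?_ ?_
  · exact key.2
  · refine (ae_restrict_mem (SP5.measurableSet_cube d)).mono fun x hx => fun s hs => ?_
    refine le_max_of_le_left (hC (x, s) ?_)
    refine Set.mk_mem_prod hx ?_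
    have := Metric.mem_ball.mp hs
    rw [Real.dist_eq] at this
    constructor <;> [linarith [abs_le.mp this.le]; linarith [(abs_le.mp this.le).2]]
  · exact integrableOn_const (SP5.isCompact_cube d).measure_lt_top.ne
  · exact Filter.Eventually.of_forall fun x => fun s _ => hderiv x s

end SP5

end SP5aux

theorem stmt_5 (d : ℕ) (hd : 2 ≤ d) (ε R₀ T : ℝ) (hε : 0 < ε) (hR₀ : 0 < R₀)
    (hT : 0 < T) (W : ℝ → ℝ) (hW : ∀ s, W s = (1 - s ^ 2) ^ 2 / 2)
    (g : EuclideanSpace ℝ (Fin d) → ℝ) (hg_smooth : ContDiff ℝ (⊤ : ℕ∞) g)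
    (hg_per : ∀ x i, g (x + EuclideanSpace.single i 1) = g x)
    (hg_bd : ∀ x, |g x| ≤ (d : ℝ) / R₀)
    (φ : EuclideanSpace ℝ (Fin d) → ℝ → ℝ)
    (hφ_smooth : ContDiff ℝ (⊤ : ℕ∞) (fun p : EuclideanSpace ℝ (Fin d) × ℝ => φ p.1 p.2))
    (hφ_per : ∀ x t i, φ (x + EuclideanSpace.single i 1) t = φ x t)
    (hPDE : ∀ x, ∀ t ∈ Set.Ioo 0 T,
      ε * deriv (fun s => φ x s) t =
        ε * lap (fun y => φ y t) x - deriv W (φ x t) / ε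
          + g x * Real.sqrt (2 * W (φ x t))) :
    ∀ t ∈ Set.Ioo 0 T,
      deriv (fun s => ∫ x in cube d,
          (ε * ‖gradient (fun y => φ y s) x‖ ^ 2 / 2 + W (φ x s) / ε)) t
        + (1 / 2) * ∫ x in cube d,
            ε * (deriv (fun s => φ x s) t) ^ 2
      ≤ ((d : ℝ) ^ 2 / R₀ ^ 2) * ∫ x in cube d, W (φ x t) / ε := by
  intro t ht
  open SP5 in
  set Φ : EuclideanSpace ℝ (Fin d) × ℝ → ℝ := fun p => φ p.1 p.2 with hΦdef
  have hΦ : ContDiff ℝ (⊤ : ℕ∞) Φ := hφ_smooth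
  have hWs : ContDiff ℝ (⊤ : ℕ∞) W := by
    rw [funext hW]
    exact ((contDiff_const.sub (contDiff_id.pow 2)).pow 2).div_const 2
  have hWnn : ∀ y, 0 ≤ W y := fun y => by rw [hW]; positivity
  -- continuity of the slices at time t
  have hc_phi : Continuous fun x : EuclideanSpace ℝ (Fin d) => φ x t :=
    hΦ.continuous.comp (Continuous.prodMk_left t)
  have hc_pT : Continuous fun x => SP5.pT Φ x t :=
    (SP5.cont_pT hΦ).comp (Continuous.prodMk_left t)
  have hc_pD : ∀ i, Continuous fun x => SP5.pD Φ i x t :=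
    fun i => (SP5.cont_pD hΦ i).comp (Continuous.prodMk_left t)
  have hc_qD : ∀ i, Continuous fun x => SP5.qD Φ i x t :=
    fun i => (SP5.cont_qD hΦ i).comp (Continuous.prodMk_left t)
  have hc_rD : ∀ i, Continuous fun x => SP5.rD Φ i x t :=
    fun i => (SP5.cont_rD hΦ i).comp (Continuous.prodMk_left t)
  -- Step A: identify the energy integrand
  have hgradeq : ∀ s, (fun x => ε * ‖gradient (fun y => φ y s) x‖ ^ 2 / 2 + W (φ x s) / ε)
      = fun x => ε * (∑ i, (SP5.pD Φ i x s) ^ 2) / 2 + W (Φ (x, s)) / ε := by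
    intro s; funext x
    have h1 : ‖gradient (fun y => φ y s) x‖ ^ 2 = ∑ i, (SP5.pD Φ i x s) ^ 2 := by
      rw [SP5.grad_norm_sq]
      exact Finset.sum_congr rfl fun i _ => by
        rw [SP5.fderiv_slice (Φ := Φ) x s (hΦ.differentiable (by simp) _)]
        rfl
    rw [h1]
  -- Step B: differentiate the energy
  have hE := SP5.hasDerivAt_energy hΦ W hWs ε t
  have hEd : deriv (fun s => ∫ x in cube d,
        (ε * ‖gradient (fun y => φ y s) x‖ ^ 2 / 2 + W (φ x s) / ε)) t
      = ∫ x in cube d,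
        (ε * (∑ i, SP5.pD Φ i x t * SP5.qD Φ i x t)
          + deriv W (Φ (x, t)) * SP5.pT Φ x t / ε) := by
    have hfun : (fun s => ∫ x in cube d,
        (ε * ‖gradient (fun y => φ y s) x‖ ^ 2 / 2 + W (φ x s) / ε))
        = fun s => ∫ x in cube d,
          (ε * (∑ i, (SP5.pD Φ i x s) ^ 2) / 2 + W (Φ (x, s)) / ε) := by
      funext s
      rw [hgradeq s]
    rw [hfun]
    exact hE.deriv
  -- Step C: periodicity of the derived quantities
  have hΦper : ∀ (p : EuclideanSpace ℝ (Fin d) × ℝ) (i : Fin d),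
      Φ (p + (EuclideanSpace.single i 1, 0)) = Φ p := by
    intro p i
    show φ (p.1 + EuclideanSpace.single i 1) (p.2 + 0) = φ p.1 p.2
    rw [add_zero]; exact hφ_per _ _ i
  have hfdper : ∀ (i : Fin d) (p), fderiv ℝ Φ (p + ((EuclideanSpace.single i 1 :
      EuclideanSpace ℝ (Fin d)), (0:ℝ))) = fderiv ℝ Φ p :=
    fun i p => SP5.fderiv_periodic Φ _ (fun q => hΦper q i) p (hΦ.differentiable (by simp) _)
  have hfd2per : ∀ (i : Fin d) (p), fderiv ℝ (fderiv ℝ Φ) (p + ((EuclideanSpace.single i 1 :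
      EuclideanSpace ℝ (Fin d)), (0:ℝ))) = fderiv ℝ (fderiv ℝ Φ) p :=
    fun i p => SP5.fderiv_periodic (fderiv ℝ Φ) _ (hfdper i) p
      (((hΦ.fderiv_right (m := (⊤ : ℕ∞)) (by simp))).differentiable (by simp) _)
  have hadd : ∀ (x : EuclideanSpace ℝ (Fin d)) (s : ℝ) (j : Fin d),
      ((x + EuclideanSpace.single j 1, s) : EuclideanSpace ℝ (Fin d) × ℝ)
        = (x, s) + (EuclideanSpace.single j 1, 0) := by
    intro x s j
    rw [Prod.mk_add_mk, add_zero]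
  have hpT_per : ∀ (j : Fin d) x, SP5.pT Φ (x + EuclideanSpace.single j 1) t = SP5.pT Φ x t := by
    intro j x
    unfold SP5.pT
    rw [hadd, hfdper j (x, t)]
  have hpD_per : ∀ (i j : Fin d) x,
      SP5.pD Φ i (x + EuclideanSpace.single j 1) t = SP5.pD Φ i x t := by
    intro i j x
    unfold SP5.pD
    rw [hadd, hfdper j (x, t)]
  -- Step D: integrate by parts via the divergence theorem
  have hdiv0 : ∫ x in cube d, ∑ i, fderiv ℝ (fun y => SP5.pT Φ y t * SP5.pD Φ i y t) x
      (EuclideanSpace.single i 1) = 0 :=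
    SP5.divergence_cube_zero' d (by omega) (fun i y => SP5.pT Φ y t * SP5.pD Φ i y t)
      (fun i => (SP5.contDiff_pT_x hΦ t).mul (SP5.contDiff_pD_x hΦ i t))
      (fun i j x => by simp only [hpT_per, hpD_per])
  have hdiveval : ∀ x, (∑ i, fderiv ℝ (fun y => SP5.pT Φ y t * SP5.pD Φ i y t) x
      (EuclideanSpace.single i 1))
      = SP5.pT Φ x t * lap (fun y => Φ (y, t)) x + ∑ i, SP5.pD Φ i x t * SP5.qD Φ i x t := by
    intro x
    rw [SP5.lap_slice hΦ, Finset.mul_sum, ← Finset.sum_add_distrib]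
    refine Finset.sum_congr rfl fun i _ => ?_
    rw [((SP5.hasFDerivAt_pT_x hΦ x t).fun_mul (SP5.hasFDerivAt_pD_x hΦ i x t)).fderiv]
    have hsymm := SP5.sndFDeriv_symm hΦ (x, t) (EuclideanSpace.single i 1, 0)
      ((0 : EuclideanSpace ℝ (Fin d)), (1:ℝ))
    simp only [ContinuousLinearMap.add_apply, ContinuousLinearMap.smul_apply,
      ContinuousLinearMap.comp_apply, ContinuousLinearMap.inl_apply,
      ContinuousLinearMap.apply_apply, smul_eq_mul]
    rw [hsymm]
    unfold SP5.rD SP5.qD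
    ring
  have hlap_int : ∫ x in cube d, (SP5.pT Φ x t * lap (fun y => Φ (y, t)) x
      + ∑ i, SP5.pD Φ i x t * SP5.qD Φ i x t) = 0 := by
    rw [← hdiv0]
    exact setIntegral_congr_fun (SP5.measurableSet_cube d) fun x _ => (hdiveval x).symm
  -- continuity of composite integrands
  have hc_lap : Continuous fun x => lap (fun y => Φ (y, t)) x := by
    have : (fun x => lap (fun y => Φ (y, t)) x) = fun x => ∑ i, SP5.rD Φ i x t := by
      funext x; exact SP5.lap_slice hΦ x t
    rw [this]
    exact continuous_finset_sum _ fun i _ => hc_rD i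
  have hc_sumpq : Continuous fun x => ∑ i, SP5.pD Φ i x t * SP5.qD Φ i x t :=
    continuous_finset_sum _ fun i _ => (hc_pD i).mul (hc_qD i)
  have hc_L : Continuous fun x => SP5.pT Φ x t * lap (fun y => Φ (y, t)) x :=
    hc_pT.mul hc_lap
  -- ∫ ∑ pD qD = - ∫ pT lap
  have hsum_eq : ∫ x in cube d, (∑ i, SP5.pD Φ i x t * SP5.qD Φ i x t)
      = - ∫ x in cube d, SP5.pT Φ x t * lap (fun y => Φ (y, t)) x := by
    have := integral_add (SP5.integrableOn_cube hc_L) (SP5.integrableOn_cube hc_sumpq)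
    rw [hlap_int] at this
    linarith [this]
  -- Step E: use the PDE
  have hpde' : ∀ x, ε * SP5.pT Φ x t = ε * lap (fun y => Φ (y, t)) x
      - deriv W (Φ (x, t)) / ε + g x * Real.sqrt (2 * W (Φ (x, t))) := by
    intro x
    have h := hPDE x t ht
    rw [show deriv (fun s => φ x s) t = SP5.pT Φ x t from SP5.deriv_sliceT hΦ x t] at h
    exact h
  have hmain : ∫ x in cube d,
      (ε * (∑ i, SP5.pD Φ i x t * SP5.qD Φ i x t) + deriv W (Φ (x, t)) * SP5.pT Φ x t / ε)
      = ∫ x in cube d,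
      (g x * Real.sqrt (2 * W (Φ (x, t))) * SP5.pT Φ x t - ε * (SP5.pT Φ x t) ^ 2) := by
    have hc_Wpt : Continuous fun x => deriv W (Φ (x, t)) * SP5.pT Φ x t / ε :=
      (((hWs.continuous_deriv (by simp)).comp hc_phi).mul hc_pT).div_const ε
    calc ∫ x in cube d, (ε * (∑ i, SP5.pD Φ i x t * SP5.qD Φ i x t)
          + deriv W (Φ (x, t)) * SP5.pT Φ x t / ε)
        = (∫ x in cube d, ε * (∑ i, SP5.pD Φ i x t * SP5.qD Φ i x t))
          + ∫ x in cube d, deriv W (Φ (x, t)) * SP5.pT Φ x t / ε := by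
          exact integral_add (SP5.integrableOn_cube (continuous_const.mul hc_sumpq))
            (SP5.integrableOn_cube hc_Wpt)
      _ = ε * (∫ x in cube d, (∑ i, SP5.pD Φ i x t * SP5.qD Φ i x t))
          + ∫ x in cube d, deriv W (Φ (x, t)) * SP5.pT Φ x t / ε := by
          rw [integral_const_mul]
      _ = (∫ x in cube d, (- ε) * (SP5.pT Φ x t * lap (fun y => Φ (y, t)) x))
          + ∫ x in cube d, deriv W (Φ (x, t)) * SP5.pT Φ x t / ε := by
          rw [integral_const_mul, hsum_eq]; ring
      _ = ∫ x in cube d, ((- ε) * (SP5.pT Φ x t * lap (fun y => Φ (y, t)) x)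
            + deriv W (Φ (x, t)) * SP5.pT Φ x t / ε) := by
          rw [← integral_add (SP5.integrableOn_cube (continuous_const.fun_mul hc_L))
            (SP5.integrableOn_cube hc_Wpt)]
      _ = ∫ x in cube d,
          (g x * Real.sqrt (2 * W (Φ (x, t))) * SP5.pT Φ x t - ε * (SP5.pT Φ x t) ^ 2) := by
          refine setIntegral_congr_fun (SP5.measurableSet_cube d) fun x _ => ?_
          have h := hpde' x
          linear_combination SP5.pT Φ x t * h
  -- Step F: assemble and estimate
  have hptderiv : (fun x => ε * (deriv (fun s => φ x s) t) ^ 2)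
      = fun x => ε * (SP5.pT Φ x t) ^ 2 := by
    funext x
    rw [show deriv (fun s => φ x s) t = SP5.pT Φ x t from SP5.deriv_sliceT hΦ x t]
  rw [hEd, hmain, hptderiv]
  have hc_G : Continuous fun x =>
      g x * Real.sqrt (2 * W (Φ (x, t))) * SP5.pT Φ x t - ε * (SP5.pT Φ x t) ^ 2 :=
    ((hg_smooth.continuous.mul (Real.continuous_sqrt.comp
      (continuous_const.mul (hWs.continuous.comp hc_phi)))).mul hc_pT).sub
      (continuous_const.mul (hc_pT.pow 2))
  have hc_pt2 : Continuous fun x => ε * (SP5.pT Φ x t) ^ 2 :=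
    continuous_const.mul (hc_pT.pow 2)
  have hc_RHS : Continuous fun x : EuclideanSpace ℝ (Fin d) =>
      ((d : ℝ) ^ 2 / R₀ ^ 2) * (W (φ x t) / ε) :=
    continuous_const.mul ((hWs.continuous.comp hc_phi).div_const ε)
  rw [show (1:ℝ)/2 * ∫ x in cube d, ε * (SP5.pT Φ x t) ^ 2
      = ∫ x in cube d, (1:ℝ)/2 * (ε * (SP5.pT Φ x t) ^ 2) from (integral_const_mul _ _).symm]
  rw [← integral_add (SP5.integrableOn_cube hc_G)
    (SP5.integrableOn_cube (continuous_const.fun_mul hc_pt2))]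
  have hRHS : ((d : ℝ) ^ 2 / R₀ ^ 2) * ∫ x in cube d, W (φ x t) / ε
      = ∫ x in cube d, ((d : ℝ) ^ 2 / R₀ ^ 2) * (W (φ x t) / ε) :=
    (integral_const_mul _ _).symm
  rw [hRHS]
  refine setIntegral_mono_on
    ((SP5.integrableOn_cube hc_G).add (SP5.integrableOn_cube (continuous_const.mul hc_pt2)))
    (SP5.integrableOn_cube hc_RHS) (SP5.measurableSet_cube d) fun x _ => ?_
  -- pointwise inequality
  set a := g x * Real.sqrt (2 * W (Φ (x, t))) with ha
  set b := SP5.pT Φ x t with hb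
  have hWx : (0:ℝ) ≤ W (Φ (x, t)) := hWnn _
  have ha2 : a ^ 2 = (g x) ^ 2 * (2 * W (Φ (x, t))) := by
    rw [ha, mul_pow, Real.sq_sqrt (by positivity)]
  have hg2 : (g x) ^ 2 ≤ ((d : ℝ) / R₀) ^ 2 := by
    have h1 := hg_bd x
    have h2 : |g x| ^ 2 ≤ ((d : ℝ) / R₀) ^ 2 :=
      pow_le_pow_left₀ (abs_nonneg _) h1 2
    rwa [sq_abs] at h2
  have hdr : ((d : ℝ) / R₀) ^ 2 = (d : ℝ) ^ 2 / R₀ ^ 2 := div_pow _ _ 2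
  have key1 : a * b - ε * b ^ 2 + 1/2 * (ε * b ^ 2) ≤ a ^ 2 / (2 * ε) := by
    have h0 : 0 ≤ (a - ε * b) ^ 2 := sq_nonneg _
    have h1 : 0 < 2 * ε := by linarith
    rw [le_div_iff₀ h1]
    nlinarith [h0]
  have key2 : a ^ 2 / (2 * ε) ≤ ((d : ℝ) ^ 2 / R₀ ^ 2) * (W (Φ (x, t)) / ε) := by
    rw [ha2, ← hdr]
    rw [div_le_iff₀ (by linarith : (0:ℝ) < 2 * ε)]
    have : ((d : ℝ) / R₀) ^ 2 * (W (Φ (x, t)) / ε) * (2 * ε)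
        = ((d : ℝ) / R₀) ^ 2 * (2 * W (Φ (x, t))) := by
      field_simp
    rw [this]
    apply mul_le_mul_of_nonneg_right hg2 (by positivity)
  show a * b - ε * b ^ 2 + 1/2 * (ε * b ^ 2) ≤ ((d : ℝ) ^ 2 / R₀ ^ 2) * (W (φ x t) / ε)
  exact le_trans key1 (le_trans key2 (le_of_eq rfl))
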